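/- Let T be an even 1-3 tree and k ≥ 2 an integer. The graph G(T) contains a cycle of length 2k if and only if either T contains two vertex-disjoint leaf-leaf paths P₁ and P₂ whose numbers of edges sum to 2k−4, or T contains a leaf-leaf path of length 2k−2. -/

import Mathlib

/-- A vertex of a graph is a *leaf* if it has exactly one neighbour. -/
def IsLeafVertex {V : Type} (T : SimpleGraph V) (v : V) : Prop :=
  (T.neighborSet v).ncard = 1

/-- A *1-3 tree* is a finite tree in which every vertex has degree 1 or 3. -/
def IsOneThreeTree {V : Type} (T : SimpleGraph V) : Prop :=
  T.IsTree ∧ ∀ v : V, (T.neighborSet v).ncard = 1 ∨ (T.neighborSet v).ncard = 3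

/-- A tree is *even* if the (unique) path between any two leaves has even length. -/
def IsEvenTree {V : Type} (T : SimpleGraph V) : Prop :=
  ∀ u w : V, IsLeafVertex T u → IsLeafVertex T w → Even (T.dist u w)

/-- `T` has a *leaf-leaf path of length `ℓ`*: a path with `ℓ` edges whose two
endpoints are leaves (for `ℓ = 0` this is a single leaf). -/
def HasLeafLeafPath {V : Type} (T : SimpleGraph V) (ℓ : ℕ) : Prop :=
  ∃ (u w : V) (p : T.Walk u w),
    IsLeafVertex T u ∧ IsLeafVertex T w ∧ p.IsPath ∧ p.length = ℓ

/-- The adjacency relation of the graph `G(T)`: two new vertices `x = Sum.inr 0`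
and `y = Sum.inr 1` are added to `T`, joined to each other and to every leaf of `T`. -/
def gtAdj {V : Type} (T : SimpleGraph V) : (V ⊕ Fin 2) → (V ⊕ Fin 2) → Prop
  | Sum.inl u, Sum.inl v => T.Adj u v
  | Sum.inl u, Sum.inr _ => IsLeafVertex T u
  | Sum.inr _, Sum.inl v => IsLeafVertex T v
  | Sum.inr i, Sum.inr j => i ≠ j

/-- The graph `G(T)` obtained from a tree `T` by adding two new vertices `x` and
`y`, the edge `xy`, and all edges from `x` and from `y` to the leaves of `T`. -/
def gtGraph {V : Type} (T : SimpleGraph V) : SimpleGraph (V ⊕ Fin 2) where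
  Adj := gtAdj T
  symm := ⟨by
    rintro (u | i) (v | j) h
    · exact T.adj_symm h
    · exact h
    · exact h
    · exact Ne.symm h⟩
  loopless := ⟨by
    rintro (u | i) h
    · exact T.irrefl h
    · exact h rfl⟩

/-- `G` contains a cycle with exactly `ℓ` edges. -/
def HasCycleOfLength {W : Type} (G : SimpleGraph W) (ℓ : ℕ) : Prop :=
  ∃ (v : W) (c : G.Walk v v), c.IsCycle ∧ c.length = ℓ

/-!
A cycle of `G(T)` cannot avoid both `x` and `y`, since `T` is acyclic. If it passes through only
`x`, it is `x`, a leaf-leaf path, `x`. If it passes through both, cutting it at `x` and `y` leaves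
two arcs, each either the edge `xy` or `x`, a leaf-leaf path, `y`; the two paths of the latter kind
are vertex-disjoint. In an even tree leaf-leaf paths have even length, so for a cycle of length
`2k ≥ 4` neither arc can be the edge `xy`. Conversely, closing up one leaf-leaf path through `x`, or
two disjoint ones through `x` and `y`, gives a cycle.
-/

open SimpleGraph Walk Sum

theorem SimpleGraph.IsAcyclic.length_eq_dist {W : Type} {G : SimpleGraph W} (hG : G.IsAcyclic)
    {u v : W} {p : G.Walk u v} (hp : p.IsPath) : p.length = G.dist u v := by
  obtain ⟨q, hq, hlen⟩ := p.reachable.exists_path_of_dist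
  have hpq : (⟨p, hp⟩ : G.Path u v) = ⟨q, hq⟩ := (hG.subsingleton_path u v).elim _ _
  rw [← hlen, show p = q from congrArg Subtype.val hpq]

theorem SimpleGraph.Walk.IsCycle.exists_isPath_split {W : Type} [DecidableEq W]
    {G : SimpleGraph W} {v a b : W} {c : G.Walk v v} (hc : c.IsCycle) (ha : a ∈ c.support)
    (hb : b ∈ c.support) (hab : a ≠ b) :
    ∃ (p : G.Walk a b) (q : G.Walk b a), p.IsPath ∧ q.IsPath ∧
      p.support.tail.Disjoint q.support.tail ∧ p.length + q.length = c.length := by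
  set c' := c.rotate a ha
  have hc' : c'.IsCycle := hc.rotate ha
  have hb' : b ∈ c'.support := (mem_support_rotate_iff _ _ _).mpr hb
  have hsplit : ((c'.takeUntil b hb').append (c'.dropUntil b hb')).IsCycle := by
    rwa [c'.take_spec hb']
  refine ⟨_, _, hc'.isPath_takeUntil hb', hsplit.isPath_of_append_right (not_nil_of_ne hab), ?_, ?_⟩
  · have := hsplit.support_nodup
    rw [tail_support_append, List.nodup_append'] at this
    exact this.2.2
  · rw [← length_append, c'.take_spec hb', length_rotate]

theorem IsEvenTree.even_length {V : Type} {T : SimpleGraph V} (hTe : IsEvenTree T)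
    (hT : T.IsAcyclic) {u w : V} {p : T.Walk u w} (hp : p.IsPath) (hu : IsLeafVertex T u)
    (hw : IsLeafVertex T w) : Even p.length :=
  hT.length_eq_dist hp ▸ hTe u w hu hw

namespace gtGraph

variable {V : Type} {T : SimpleGraph V}

variable (T) in
def inlHom : T →g gtGraph T := ⟨inl, id⟩

theorem inlHom_apply (v : V) : inlHom T v = inl v := rfl

theorem adj_inr_inl_iff {u : V} {i : Fin 2} :
    (gtGraph T).Adj (inr i) (inl u) ↔ IsLeafVertex T u :=
  Iff.rfl

-- Endpoints written `inlHom T u`, not the defeq `inl u`: `rw`/`simp` with walk lemmas on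
-- `cons` and `concat` around `q.map (inlHom T)` only match if the types agree syntactically.
theorem adj_inr_inlHom {u : V} (i : Fin 2) (hu : IsLeafVertex T u) :
    (gtGraph T).Adj (inr i) (inlHom T u) := hu

theorem adj_inlHom_inr {w : V} (j : Fin 2) (hw : IsLeafVertex T w) :
    (gtGraph T).Adj (inlHom T w) (inr j) := hw

def leafArc {u w : V} (q : T.Walk u w) (hu : IsLeafVertex T u) (hw : IsLeafVertex T w)
    (i j : Fin 2) : (gtGraph T).Walk (inr i) (inr j) :=
  cons (adj_inr_inlHom i hu) ((q.map (inlHom T)).concat (adj_inlHom_inr j hw))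

section leafArc

variable {u w : V} {q : T.Walk u w} {hu : IsLeafVertex T u} {hw : IsLeafVertex T w} {i j : Fin 2}

@[simp]
theorem length_leafArc : (leafArc q hu hw i j).length = q.length + 2 := by
  simp only [leafArc, length_cons, length_concat, length_map]

@[simp]
theorem support_tail_leafArc :
    (leafArc q hu hw i j).support.tail = q.support.map inl ++ [inr j] := by
  rw [leafArc, support_cons, List.tail_cons, support_concat, Walk.support_map]
  rfl

theorem inr_notMem_support_map (j : Fin 2) : inr j ∉ (q.map (inlHom T)).support := by
  rw [Walk.support_map]
  simp [inlHom_apply]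

theorem isPath_map_concat_iff (hw : IsLeafVertex T w) :
    ((q.map (inlHom T)).concat (adj_inlHom_inr j hw)).IsPath ↔ q.IsPath :=
  ⟨fun h => ((concat_isPath_iff _).mp h).1.of_map,
    fun hq => (hq.map inl_injective).concat (inr_notMem_support_map j) _⟩

theorem isPath_leafArc (hq : q.IsPath) (hij : i ≠ j) : (leafArc q hu hw i j).IsPath := by
  refine ((isPath_map_concat_iff hw).mpr hq).cons ?_
  rw [support_concat, List.mem_append, List.mem_singleton, not_or]
  exact ⟨inr_notMem_support_map i, by simpa using hij⟩

theorem isCycle_leafArc (hq : q.IsPath) (hpos : 0 < q.length) :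
    (leafArc q hu hw i i).IsCycle :=
  isCycle_iff_isPath_tail_and_le_length.mpr
    ⟨by simpa [leafArc, tail_cons] using (isPath_map_concat_iff hw).mpr hq, by simp; omega⟩

end leafArc

theorem exists_eq_concat_map {j : Fin 2} : ∀ {u : V} (p : (gtGraph T).Walk (inl u) (inr j)),
    p.IsPath → (∀ i, inr i ∈ p.support → i = j) →
    ∃ (w : V) (q : T.Walk u w) (hw : IsLeafVertex T w),
      p = (q.map (inlHom T)).concat (adj_inlHom_inr j hw)
  | _, cons (v := inr i) h p, hp, hj => by
    obtain rfl : i = j := hj i (by simp)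
    obtain rfl : p = nil := (isPath_iff_nil.mp hp.of_cons).eq_nil
    exact ⟨_, nil, adj_inr_inl_iff.mp h.symm, rfl⟩
  | _, cons (v := inl _) h p, hp, hj => by
    obtain ⟨w, q, hw, rfl⟩ := exists_eq_concat_map p hp.of_cons fun i hi => hj i (by simp [hi])
    exact ⟨w, cons h q, hw, rfl⟩

theorem isCycle_leafArc_append {u₁ w₁ u₂ w₂ : V} {q₁ : T.Walk u₁ w₁} {q₂ : T.Walk u₂ w₂}
    (hu₁ : IsLeafVertex T u₁) (hw₁ : IsLeafVertex T w₁) (hu₂ : IsLeafVertex T u₂)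
    (hw₂ : IsLeafVertex T w₂) (hq₁ : q₁.IsPath) (hq₂ : q₂.IsPath)
    (hdisj : q₁.support.Disjoint q₂.support) {i j : Fin 2} (hij : i ≠ j) :
    ((leafArc q₁ hu₁ hw₁ i j).append (leafArc q₂ hu₂ hw₂ j i)).IsCycle := by
  refine (isPath_leafArc hq₁ hij).isCycle_append (isPath_leafArc hq₂ hij.symm) ?_ (by simp)
  rw [support_tail_leafArc, support_tail_leafArc]
  simp only [List.disjoint_append_left, List.disjoint_append_right, List.disjoint_singleton,
    List.singleton_disjoint]
  exact ⟨⟨List.disjoint_map inl_injective hdisj, by simp⟩, by simpa using hij⟩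

theorem exists_inr_mem_support_of_isCycle (hT : T.IsAcyclic) {v : V ⊕ Fin 2}
    {c : (gtGraph T).Walk v v} (hc : c.IsCycle) : ∃ i, inr i ∈ c.support := by
  by_contra! h
  have hrange : ∀ x ∈ c.support, x ∈ Set.range (inl : V → V ⊕ Fin 2) := by
    rintro (a | i) hx
    · exact ⟨a, rfl⟩
    · exact absurd hx (h i)
  have hinduce : ((gtGraph T).induce (Set.range inl)).IsAcyclic :=
    (Embedding.isoInduceRange ⟨Function.Embedding.inl, Iff.rfl⟩).isAcyclic_iff.mp hT
  exact hinduce (c.induce _ hrange) (IsCycle.of_map (by rwa [map_induce]))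

theorem length_eq_one_or_exists_eq_leafArc {i j : Fin 2} (hij : i ≠ j)
    {d : (gtGraph T).Walk (inr i) (inr j)} (hd : d.IsPath) :
    d.length = 1 ∨ ∃ (u w : V) (q : T.Walk u w) (hu : IsLeafVertex T u) (hw : IsLeafVertex T w),
      q.IsPath ∧ d = leafArc q hu hw i j := by
  obtain ⟨a, h, p, rfl⟩ := exists_eq_cons_of_ne (by simpa using hij) d
  obtain ⟨hp, hip⟩ := (cons_isPath_iff h p).mp hd
  cases a with
  | inr k =>
    obtain rfl : k = j := by
      have : i ≠ k := h
      omega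
    obtain rfl : p = nil := (isPath_iff_nil.mp hp).eq_nil
    exact Or.inl rfl
  | inl u =>
    obtain ⟨w, q, hw, rfl⟩ := exists_eq_concat_map p hp fun k hk => by
      have : inr k ≠ inr i := ne_of_mem_of_not_mem hk hip
      have : k ≠ i := by simpa using this
      omega
    exact Or.inr ⟨u, w, q, adj_inr_inl_iff.mp h, hw, (isPath_map_concat_iff hw).mp hp, rfl⟩

theorem hasLeafLeafPath_of_isCycle {i j : Fin 2} (hij : i ≠ j) {v : V ⊕ Fin 2}
    {c : (gtGraph T).Walk v v} (hc : c.IsCycle) (hi : inr i ∈ c.support)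
    (hj : inr j ∉ c.support) : HasLeafLeafPath T (c.length - 2) := by
  classical
  have hj' : inr j ∉ (c.rotate _ hi).support := by rwa [mem_support_rotate_iff]
  have hc' := hc.rotate hi
  rw [← length_rotate c _ hi]
  generalize c.rotate _ hi = c' at hc' hj'
  cases c' with
  | nil => exact absurd hc' not_isCycle_nil
  | @cons _ a _ h p =>
    have hp := ((cons_isCycle_iff p h).mp hc').1
    cases a with
    | inr k =>
      have : i ≠ k := h
      obtain rfl : k = j := by omega
      exact absurd (by simp) hj'
    | inl u =>
      obtain ⟨w, q, hw, rfl⟩ := exists_eq_concat_map p hp fun k hk => by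
        have : k ≠ j := fun hkj => hj' (by simp [← hkj, hk])
        omega
      have hu := adj_inr_inl_iff.mp h
      refine ⟨u, w, q, hu, hw, (isPath_map_concat_iff hw).mp hp, ?_⟩
      change q.length = (leafArc q hu hw i i).length - 2
      simp

theorem exists_leafPaths_of_isCycle (hT : T.IsAcyclic) (hTe : IsEvenTree T) {k : ℕ} (hk : 2 ≤ k)
    {v : V ⊕ Fin 2} {c : (gtGraph T).Walk v v} (hc : c.IsCycle) (hlen : c.length = 2 * k) :
    (∃ (u₁ w₁ u₂ w₂ : V) (p₁ : T.Walk u₁ w₁) (p₂ : T.Walk u₂ w₂),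
        IsLeafVertex T u₁ ∧ IsLeafVertex T w₁ ∧ IsLeafVertex T u₂ ∧ IsLeafVertex T w₂ ∧
        p₁.IsPath ∧ p₂.IsPath ∧ p₁.support.Disjoint p₂.support ∧
        p₁.length + p₂.length = 2 * k - 4) ∨
      HasLeafLeafPath T (2 * k - 2) := by
  classical
  obtain ⟨i, hi⟩ := exists_inr_mem_support_of_isCycle hT hc
  by_cases hall : ∀ j : Fin 2, inr j ∈ c.support
  · left
    obtain ⟨d₁, d₂, hd₁, hd₂, hdisj, hlen'⟩ := hc.exists_isPath_split (hall 0) (hall 1) (by simp)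
    rcases length_eq_one_or_exists_eq_leafArc (by simp) hd₁ with
      h₁ | ⟨u₁, w₁, q₁, hu₁, hw₁, hq₁, rfl⟩ <;>
    rcases length_eq_one_or_exists_eq_leafArc (by simp) hd₂ with
      h₂ | ⟨u₂, w₂, q₂, hu₂, hw₂, hq₂, rfl⟩
    · omega
    · obtain ⟨m, hm⟩ := hTe.even_length hT hq₂ hu₂ hw₂
      simp only [length_leafArc] at hlen'
      omega
    · obtain ⟨m, hm⟩ := hTe.even_length hT hq₁ hu₁ hw₁
      simp only [length_leafArc] at hlen'
      omega
    · rw [support_tail_leafArc, support_tail_leafArc] at hdisj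
      simp only [length_leafArc] at hlen'
      refine ⟨u₁, w₁, u₂, w₂, q₁, q₂, hu₁, hw₁, hu₂, hw₂, hq₁, hq₂, fun a ha₁ ha₂ => ?_, by omega⟩
      exact hdisj (List.mem_append_left _ (List.mem_map_of_mem ha₁))
        (List.mem_append_left _ (List.mem_map_of_mem ha₂))
  · right
    obtain ⟨j, hj⟩ := not_forall.mp hall
    have hij : i ≠ j := by
      rintro rfl
      exact hj hi
    simpa [hlen] using hasLeafLeafPath_of_isCycle hij hc hi hj

end gtGraph

theorem gt_even_cycle_iff_leaf_paths_general {V : Type} (T : SimpleGraph V)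
    (hT : IsOneThreeTree T) (hTe : IsEvenTree T) (k : ℕ) (hk : 2 ≤ k) :
    HasCycleOfLength (gtGraph T) (2 * k) ↔
      ((∃ (u₁ w₁ u₂ w₂ : V) (p₁ : T.Walk u₁ w₁) (p₂ : T.Walk u₂ w₂),
          IsLeafVertex T u₁ ∧ IsLeafVertex T w₁ ∧
          IsLeafVertex T u₂ ∧ IsLeafVertex T w₂ ∧
          p₁.IsPath ∧ p₂.IsPath ∧ p₁.support.Disjoint p₂.support ∧
          p₁.length + p₂.length = 2 * k - 4) ∨
        HasLeafLeafPath T (2 * k - 2)) := by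
  constructor
  · rintro ⟨v, c, hc, hlen⟩
    exact gtGraph.exists_leafPaths_of_isCycle hT.1.isAcyclic hTe hk hc hlen
  · rintro (⟨u₁, w₁, u₂, w₂, p₁, p₂, hu₁, hw₁, hu₂, hw₂, hp₁, hp₂, hdisj, hlen⟩ |
      ⟨u, w, p, hu, hw, hp, hlen⟩)
    · refine ⟨_, _, gtGraph.isCycle_leafArc_append hu₁ hw₁ hu₂ hw₂ hp₁ hp₂ hdisj zero_ne_one, ?_⟩
      simp only [length_append, gtGraph.length_leafArc]
      omega
    · refine ⟨_, gtGraph.leafArc p hu hw 0 0, gtGraph.isCycle_leafArc hp (by omega), ?_⟩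
      simp only [gtGraph.length_leafArc]
      omega

/-- Let `T` be an even 1-3 tree and `k ≥ 2` an integer.  The
graph `G(T)` contains a cycle of length `2k` if and only if either `T` contains
two vertex-disjoint leaf-leaf paths whose numbers of edges sum to `2k−4`, or
`T` contains a leaf-leaf path of length `2k−2`. -/
theorem gt_even_cycle_iff_leaf_paths {V : Type} [Fintype V] (T : SimpleGraph V)
    (hT : IsOneThreeTree T) (hTe : IsEvenTree T) (k : ℕ) (hk : 2 ≤ k) :
    HasCycleOfLength (gtGraph T) (2 * k) ↔
      ((∃ (u₁ w₁ u₂ w₂ : V) (p₁ : T.Walk u₁ w₁) (p₂ : T.Walk u₂ w₂),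
          IsLeafVertex T u₁ ∧ IsLeafVertex T w₁ ∧
          IsLeafVertex T u₂ ∧ IsLeafVertex T w₂ ∧
          p₁.IsPath ∧ p₂.IsPath ∧ p₁.support.Disjoint p₂.support ∧
          p₁.length + p₂.length = 2 * k - 4) ∨
        HasLeafLeafPath T (2 * k - 2)) :=
  gt_even_cycle_iff_leaf_paths_general T hT hTe k hk
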